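/- Let P be row-stochastic on finite S satisfying the Doeblin condition P^m(s,·) ≥ q ψ(·) with m ≥ 1, q ∈ (0,1], r : S → [0,1], η the stationary distribution, and α = ∑_s η(s) r(s). Then for all t ≥ 0, ‖P^t r − α·1‖_∞ ≤ (1−q)^{⌊t/m⌋}, and hence for γ ∈ [0,1), ‖(1−γ)(I−γP)^{-1} r − α·1‖_∞ ≤ (1−γ) ∑_{t=0}^∞ (1−q)^{⌊t/m⌋} = (1−γ) · m/q. -/

import Mathlib

open Matrix Finset

section Aux
variable {S : Type*} [Fintype S] [Nonempty S]

noncomputable def vmax (f : S → ℝ) : ℝ := Finset.univ.sup' Finset.univ_nonempty f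
noncomputable def vmin (f : S → ℝ) : ℝ := Finset.univ.inf' Finset.univ_nonempty f

lemma le_vmax (f : S → ℝ) (s : S) : f s ≤ vmax f :=
  Finset.le_sup' f (Finset.mem_univ s)

lemma vmin_le (f : S → ℝ) (s : S) : vmin f ≤ f s :=
  Finset.inf'_le f (Finset.mem_univ s)

lemma sum_mul_le_vmax (w f : S → ℝ) (hw : ∀ s, 0 ≤ w s) :
    ∑ s, w s * f s ≤ (∑ s, w s) * vmax f := by
  rw [Finset.sum_mul]
  exact Finset.sum_le_sum fun s _ => mul_le_mul_of_nonneg_left (le_vmax f s) (hw s)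

lemma vmin_le_sum_mul (w f : S → ℝ) (hw : ∀ s, 0 ≤ w s) :
    (∑ s, w s) * vmin f ≤ ∑ s, w s * f s := by
  rw [Finset.sum_mul]
  exact Finset.sum_le_sum fun s _ => mul_le_mul_of_nonneg_left (vmin_le f s) (hw s)

lemma vmin_le_vmax (f : S → ℝ) : vmin f ≤ vmax f :=
  le_trans (vmin_le f (Classical.arbitrary S)) (le_vmax f _)

/-- stochastic matrix application: pointwise bounds -/
lemma mulVec_le_vmax {Q : Matrix S S ℝ} (h0 : ∀ s s', 0 ≤ Q s s')
    (h1 : ∀ s, ∑ s', Q s s' = 1) (f : S → ℝ) (s : S) : (Q *ᵥ f) s ≤ vmax f := by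
  have := sum_mul_le_vmax (fun s' => Q s s') f (fun s' => h0 s s')
  rwa [h1 s, one_mul] at this

lemma vmin_le_mulVec {Q : Matrix S S ℝ} (h0 : ∀ s s', 0 ≤ Q s s')
    (h1 : ∀ s, ∑ s', Q s s' = 1) (f : S → ℝ) (s : S) : vmin f ≤ (Q *ᵥ f) s := by
  have := vmin_le_sum_mul (fun s' => Q s s') f (fun s' => h0 s s')
  rwa [h1 s, one_mul] at this

lemma vmax_mulVec_le {Q : Matrix S S ℝ} (h0 : ∀ s s', 0 ≤ Q s s')
    (h1 : ∀ s, ∑ s', Q s s' = 1) (f : S → ℝ) : vmax (Q *ᵥ f) ≤ vmax f :=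
  Finset.sup'_le _ _ fun s _ => mulVec_le_vmax h0 h1 f s

lemma le_vmin_mulVec {Q : Matrix S S ℝ} (h0 : ∀ s s', 0 ≤ Q s s')
    (h1 : ∀ s, ∑ s', Q s s' = 1) (f : S → ℝ) : vmin f ≤ vmin (Q *ᵥ f) :=
  Finset.le_inf' _ _ fun s _ => vmin_le_mulVec h0 h1 f s

end Aux

section Pow
variable {S : Type*} [Fintype S] [DecidableEq S]

lemma pow_entry_nonneg {P : Matrix S S ℝ} (hP0 : ∀ s s', 0 ≤ P s s') (t : ℕ) :
    ∀ s s', 0 ≤ (P ^ t) s s' := by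
  induction t with
  | zero => intro s s'; simp [Matrix.one_apply]; positivity
  | succ t ih =>
    intro s s'
    rw [pow_succ, Matrix.mul_apply]
    exact Finset.sum_nonneg fun u _ => mul_nonneg (ih s u) (hP0 u s')

lemma pow_row_sum {P : Matrix S S ℝ} (hP1 : ∀ s, ∑ s', P s s' = 1) (t : ℕ) :
    ∀ s, ∑ s', (P ^ t) s s' = 1 := by
  induction t with
  | zero => intro s; simp [Matrix.one_apply]
  | succ t ih =>
    intro s
    simp only [pow_succ, Matrix.mul_apply]
    rw [Finset.sum_comm]
    calc ∑ u, (∑ s', (P ^ t) s u * P u s') = ∑ u, (P ^ t) s u * ∑ s', P u s' := by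
          simp_rw [Finset.mul_sum]
      _ = 1 := by simp_rw [hP1, mul_one]; exact ih s

end Pow

section Doeblin
variable {S : Type*} [Fintype S] [Nonempty S]

lemma doeblin_contract {Pm : Matrix S S ℝ} {q : ℝ} {ψ : S → ℝ}
    (h1 : ∀ s, ∑ s', Pm s s' = 1) (hψ1 : ∑ s, ψ s = 1)
    (hd : ∀ s s', q * ψ s' ≤ Pm s s') (f : S → ℝ) :
    vmax (Pm *ᵥ f) - vmin (Pm *ᵥ f) ≤ (1 - q) * (vmax f - vmin f) := by
  set c := q * ∑ u, ψ u * f u with hc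
  have hwsum : ∀ s : S, ∑ u, (Pm s u - q * ψ u) = 1 - q := by
    intro s
    rw [Finset.sum_sub_distrib, h1 s, ← Finset.mul_sum, hψ1, mul_one]
  have key : ∀ s, (Pm *ᵥ f) s = (∑ u, (Pm s u - q * ψ u) * f u) + c := by
    intro s
    simp only [Matrix.mulVec, dotProduct, sub_mul, Finset.sum_sub_distrib, hc,
      Finset.mul_sum, mul_assoc]
    ring
  have hub : ∀ s, (Pm *ᵥ f) s ≤ (1 - q) * vmax f + c := by
    intro s
    rw [key s]
    have := sum_mul_le_vmax (fun u => Pm s u - q * ψ u) f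
      (fun u => sub_nonneg.mpr (hd s u))
    rw [hwsum s] at this
    linarith
  have hlb : ∀ s, (1 - q) * vmin f + c ≤ (Pm *ᵥ f) s := by
    intro s
    rw [key s]
    have := vmin_le_sum_mul (fun u => Pm s u - q * ψ u) f
      (fun u => sub_nonneg.mpr (hd s u))
    rw [hwsum s] at this
    linarith
  have h1' : vmax (Pm *ᵥ f) ≤ (1 - q) * vmax f + c :=
    Finset.sup'_le _ _ fun s _ => hub s
  have h2' : (1 - q) * vmin f + c ≤ vmin (Pm *ᵥ f) :=
    Finset.le_inf' _ _ fun s _ => hlb s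
  linarith

end Doeblin

section Part1
variable {S : Type*} [Fintype S] [Nonempty S] [DecidableEq S]

lemma part1 (P : Matrix S S ℝ) (hP0 : ∀ s s', 0 ≤ P s s') (hP1 : ∀ s, ∑ s', P s s' = 1)
    (m : ℕ) (hm : 1 ≤ m) (q : ℝ) (hq0 : 0 < q) (hq1 : q ≤ 1)
    (ψ : S → ℝ) (hψ0 : ∀ s, 0 ≤ ψ s) (hψ1 : ∑ s, ψ s = 1)
    (hdoeblin : ∀ s s', q * ψ s' ≤ (P ^ m) s s')
    (η : S → ℝ) (hη0 : ∀ s, 0 ≤ η s) (hη1 : ∑ s, η s = 1) (hηP : η ᵥ* P = η)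
    (r : S → ℝ) (hr0 : ∀ s, 0 ≤ r s) (hr1 : ∀ s, r s ≤ 1)
    (α : ℝ) (hα : α = ∑ s, η s * r s) :
    ∀ t : ℕ, ‖(P ^ t) *ᵥ r - α • (1 : S → ℝ)‖ ≤ (1 - q) ^ (t / m) := by
  have hq1' : (0:ℝ) ≤ 1 - q := by linarith
  -- oscillation contraction for iterates of P^m
  have osc_iter : ∀ (k : ℕ) (f : S → ℝ),
      vmax ((P ^ m) ^ k *ᵥ f) - vmin ((P ^ m) ^ k *ᵥ f)
        ≤ (1 - q) ^ k * (vmax f - vmin f) := by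
    intro k
    induction k with
    | zero => intro f; simp [Matrix.one_mulVec]
    | succ k ih =>
      intro f
      have h1 : (P ^ m) ^ (k + 1) *ᵥ f = (P ^ m) ^ k *ᵥ ((P ^ m) *ᵥ f) := by
        rw [Matrix.mulVec_mulVec, ← pow_succ]
      rw [h1]
      calc vmax ((P ^ m) ^ k *ᵥ ((P ^ m) *ᵥ f)) - vmin ((P ^ m) ^ k *ᵥ ((P ^ m) *ᵥ f))
          ≤ (1 - q) ^ k * (vmax ((P ^ m) *ᵥ f) - vmin ((P ^ m) *ᵥ f)) := ih _
        _ ≤ (1 - q) ^ k * ((1 - q) * (vmax f - vmin f)) := by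
            apply mul_le_mul_of_nonneg_left _ (pow_nonneg hq1' k)
            exact doeblin_contract (pow_row_sum hP1 m) hψ1 hdoeblin f
        _ = (1 - q) ^ (k + 1) * (vmax f - vmin f) := by ring
  intro t
  -- decompose t
  set k := t / m with hk
  set j := t % m with hj
  have hpt : (P ^ t) *ᵥ r = (P ^ m) ^ k *ᵥ ((P ^ j) *ᵥ r) := by
    rw [Matrix.mulVec_mulVec, ← pow_mul, ← pow_add, Nat.div_add_mod]
  set g : S → ℝ := (P ^ t) *ᵥ r with hg
  -- osc bound
  have hosc : vmax g - vmin g ≤ (1 - q) ^ k := by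
    rw [hpt]
    calc vmax ((P ^ m) ^ k *ᵥ ((P ^ j) *ᵥ r)) - vmin ((P ^ m) ^ k *ᵥ ((P ^ j) *ᵥ r))
        ≤ (1 - q) ^ k * (vmax ((P ^ j) *ᵥ r) - vmin ((P ^ j) *ᵥ r)) := osc_iter k _
      _ ≤ (1 - q) ^ k * 1 := by
          apply mul_le_mul_of_nonneg_left _ (pow_nonneg hq1' k)
          have h1 : vmax ((P ^ j) *ᵥ r) ≤ vmax r :=
            vmax_mulVec_le (pow_entry_nonneg hP0 j) (pow_row_sum hP1 j) r
          have h2 : vmin r ≤ vmin ((P ^ j) *ᵥ r) :=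
            le_vmin_mulVec (pow_entry_nonneg hP0 j) (pow_row_sum hP1 j) r
          have h3 : vmax r ≤ 1 := Finset.sup'_le _ _ fun s _ => hr1 s
          have h4 : (0:ℝ) ≤ vmin r := Finset.le_inf' _ _ fun s _ => hr0 s
          linarith
      _ = (1 - q) ^ k := mul_one _
  -- α is a convex combination of the entries of g
  have hηPt : ∀ n : ℕ, η ᵥ* P ^ n = η := by
    intro n
    induction n with
    | zero => simp
    | succ n ih => rw [pow_succ, ← Matrix.vecMul_vecMul, ih, hηP]
  have hαg : α = ∑ s, η s * g s := by
    have : ∑ s, η s * g s = η ⬝ᵥ ((P ^ t) *ᵥ r) := rfl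
    rw [this, Matrix.dotProduct_mulVec, hηPt t]
    rw [hα]; rfl
  have hαub : α ≤ vmax g := by
    rw [hαg]
    have := sum_mul_le_vmax η g hη0
    rwa [hη1, one_mul] at this
  have hαlb : vmin g ≤ α := by
    rw [hαg]
    have := vmin_le_sum_mul η g hη0
    rwa [hη1, one_mul] at this
  -- conclude
  rw [pi_norm_le_iff_of_nonneg (pow_nonneg hq1' k)]
  intro s
  simp only [Pi.sub_apply, Pi.smul_apply, Pi.one_apply, smul_eq_mul, mul_one,
    Real.norm_eq_abs]
  rw [abs_sub_le_iff]
  have h5 := le_vmax g s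
  have h6 := vmin_le g s
  constructor <;> linarith

end Part1

lemma tsum_pow_div_eq (m : ℕ) (hm : 1 ≤ m) (c : ℝ) (hc0 : 0 ≤ c) (hc1 : c < 1) :
    Summable (fun t : ℕ => c ^ (t / m)) ∧ ∑' t : ℕ, c ^ (t / m) = m * (1 - c)⁻¹ := by
  haveI : NeZero m := ⟨by omega⟩
  set e := Nat.divModEquiv m with he
  set g : ℕ × Fin m → ℝ := fun p => c ^ p.1 with hgdef
  have hfe : (fun t : ℕ => c ^ (t / m)) ∘ e.symm = g := by
    funext p
    simp only [Function.comp_apply, hgdef]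
    congr 1
    show (p.1 * m + (p.2 : ℕ)) / m = p.1
    rw [mul_comm, Nat.mul_add_div (by omega), Nat.div_eq_of_lt p.2.isLt, add_zero]
  have hgsum : Summable g := by
    rw [summable_prod_of_nonneg (fun p => pow_nonneg hc0 _)]
    constructor
    · intro k; exact summable_of_finite_support (Set.toFinite _)
    · have : (fun k : ℕ => ∑' _ : Fin m, c ^ k) = fun k : ℕ => (m : ℝ) * c ^ k := by
        funext k; rw [tsum_fintype]; simp [Finset.card_univ, mul_comm]
      rw [this]
      exact (summable_geometric_of_lt_one hc0 hc1).mul_left _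
  have hsum : Summable (fun t : ℕ => c ^ (t / m)) := by
    rw [← Equiv.summable_iff e.symm, hfe]; exact hgsum
  refine ⟨hsum, ?_⟩
  have h1 : ∑' t : ℕ, c ^ (t / m) = ∑' p : ℕ × Fin m, g p := by
    rw [← Equiv.tsum_eq e.symm (fun t : ℕ => c ^ (t / m))]
    exact tsum_congr fun p => congrFun hfe p
  rw [h1, Summable.tsum_prod' hgsum (fun k => summable_of_finite_support (Set.toFinite _))]
  have : ∀ k : ℕ, ∑' _ : Fin m, c ^ k = (m : ℝ) * c ^ k := by
    intro k; rw [tsum_fintype]; simp [Finset.card_univ, mul_comm]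
  simp_rw [hgdef, this]
  rw [tsum_mul_left, tsum_geometric_of_lt_one hc0 hc1]

/-- Under the Doeblin condition, ‖P^t r − α·1‖_∞ ≤ (1−q)^{⌊t/m⌋}, and hence
‖(1−γ)(I−γP)⁻¹ r − α·1‖_∞ ≤ (1−γ)·m/q. -/
theorem discounted_minus_average_bound_of_doeblin {S : Type*} [Fintype S] [Nonempty S]
    [DecidableEq S]
    (P : Matrix S S ℝ) (hP0 : ∀ s s', 0 ≤ P s s') (hP1 : ∀ s, ∑ s', P s s' = 1)
    (m : ℕ) (hm : 1 ≤ m) (q : ℝ) (hq0 : 0 < q) (hq1 : q ≤ 1)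
    (ψ : S → ℝ) (hψ0 : ∀ s, 0 ≤ ψ s) (hψ1 : ∑ s, ψ s = 1)
    (hdoeblin : ∀ s s', q * ψ s' ≤ (P ^ m) s s')
    (η : S → ℝ) (hη0 : ∀ s, 0 ≤ η s) (hη1 : ∑ s, η s = 1) (hηP : η ᵥ* P = η)
    (r : S → ℝ) (hr0 : ∀ s, 0 ≤ r s) (hr1 : ∀ s, r s ≤ 1)
    (α : ℝ) (hα : α = ∑ s, η s * r s)
    (γ : ℝ) (hγ0 : 0 ≤ γ) (hγ1 : γ < 1) :
    (∀ t : ℕ, ‖(P ^ t) *ᵥ r - α • (1 : S → ℝ)‖ ≤ (1 - q) ^ (t / m)) ∧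
    ‖(1 - γ) • ((1 - γ • P)⁻¹ *ᵥ r) - α • (1 : S → ℝ)‖ ≤ (1 - γ) * m / q := by
  have hpart1 := part1 P hP0 hP1 m hm q hq0 hq1 ψ hψ0 hψ1 hdoeblin η hη0 hη1 hηP r hr0 hr1 α hα
  refine ⟨hpart1, ?_⟩
  letI : SeminormedRing (Matrix S S ℝ) := Matrix.linftyOpSemiNormedRing
  letI : NormedRing (Matrix S S ℝ) := Matrix.linftyOpNormedRing
  letI : NormedAlgebra ℝ (Matrix S S ℝ) := Matrix.linftyOpNormedAlgebra
  -- norm of γ • P is < 1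
  have hPnorm : ‖P‖ ≤ 1 := by
    rw [Matrix.linfty_opNorm_def]
    have hsup : ((Finset.univ : Finset S).sup fun i => ∑ j, ‖P i j‖₊) ≤ (1 : NNReal) := by
      apply Finset.sup_le
      intro i _
      rw [← NNReal.coe_le_coe, NNReal.coe_sum, NNReal.coe_one]
      have : ∀ j, ((‖P i j‖₊ : ℝ)) = P i j := by
        intro j
        rw [coe_nnnorm, Real.norm_eq_abs, abs_of_nonneg (hP0 i j)]
      simp_rw [this]
      rw [hP1 i]
    exact_mod_cast hsup
  have hnorm : ‖γ • P‖ < 1 := by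
    rw [norm_smul, Real.norm_eq_abs, abs_of_nonneg hγ0]
    calc γ * ‖P‖ ≤ γ * 1 := mul_le_mul_of_nonneg_left hPnorm hγ0
      _ < 1 := by linarith
  have hSum : Summable (fun n : ℕ => (γ • P) ^ n) :=
    summable_geometric_of_norm_lt_one hnorm
  have hinv : (1 - γ • P)⁻¹ = ∑' n : ℕ, (γ • P) ^ n :=
    Matrix.inv_eq_right_inv (mul_neg_geom_series _ hnorm)
  -- exchange mulVec and tsum
  let L : Matrix S S ℝ →ₗ[ℝ] (S → ℝ) :=
    { toFun := fun A => A *ᵥ r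
      map_add' := fun A B => Matrix.add_mulVec A B r
      map_smul' := fun c A => by simp [Matrix.smul_mulVec] }
  have hmv : (∑' n : ℕ, (γ • P) ^ n) *ᵥ r = ∑' n : ℕ, ((γ • P) ^ n *ᵥ r) :=
    (LinearMap.toContinuousLinearMap L).map_tsum hSum
  have hpow : ∀ n : ℕ, (γ • P) ^ n *ᵥ r = γ ^ n • ((P ^ n) *ᵥ r) := by
    intro n
    rw [smul_pow, Matrix.smul_mulVec]
  -- norms of P^n r are at most 1
  have hgn : ∀ n : ℕ, ‖(P ^ n) *ᵥ r‖ ≤ 1 := by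
    intro n
    rw [pi_norm_le_iff_of_nonneg zero_le_one]
    intro s
    rw [Real.norm_eq_abs, abs_le]
    have h1 := mulVec_le_vmax (pow_entry_nonneg hP0 n) (pow_row_sum hP1 n) r s
    have h2 := vmin_le_mulVec (pow_entry_nonneg hP0 n) (pow_row_sum hP1 n) r s
    have h3 : vmax r ≤ 1 := Finset.sup'_le _ _ fun u _ => hr1 u
    have h4 : (0:ℝ) ≤ vmin r := Finset.le_inf' _ _ fun u _ => hr0 u
    constructor <;> linarith
  -- summability facts
  have hgeo : Summable (fun n : ℕ => γ ^ n) := summable_geometric_of_lt_one hγ0 hγ1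
  have hSg : Summable (fun n : ℕ => γ ^ n • ((P ^ n) *ᵥ r)) := by
    apply Summable.of_norm
    apply Summable.of_nonneg_of_le (fun n => norm_nonneg _) _ hgeo
    intro n
    rw [norm_smul, Real.norm_eq_abs, abs_of_nonneg (pow_nonneg hγ0 n)]
    calc γ ^ n * ‖(P ^ n) *ᵥ r‖ ≤ γ ^ n * 1 :=
          mul_le_mul_of_nonneg_left (hgn n) (pow_nonneg hγ0 n)
      _ = γ ^ n := mul_one _
  have hSc : Summable (fun n : ℕ => γ ^ n • (α • (1 : S → ℝ))) := hgeo.smul_const _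
  -- rewrite α • 1
  have hγne : (1 - γ) ≠ 0 := by linarith
  have hα1 : α • (1 : S → ℝ) = (1 - γ) • ∑' n : ℕ, γ ^ n • (α • (1 : S → ℝ)) := by
    rw [Summable.tsum_smul_const hgeo, tsum_geometric_of_lt_one hγ0 hγ1, smul_smul, smul_smul,
      mul_inv_cancel₀ hγne, one_mul]
  -- main rewriting of the difference
  have hdiff : (1 - γ) • ((1 - γ • P)⁻¹ *ᵥ r) - α • (1 : S → ℝ)
      = (1 - γ) • ∑' n : ℕ, γ ^ n • ((P ^ n) *ᵥ r - α • (1 : S → ℝ)) := by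
    rw [hinv, hmv]
    simp_rw [hpow]
    conv_lhs => rw [hα1]
    rw [← smul_sub, ← Summable.tsum_sub hSg hSc]
    congr 1
    apply tsum_congr
    intro n
    rw [smul_sub]
  rw [hdiff]
  -- bound the norm
  have hq1' : (0:ℝ) ≤ 1 - q := by linarith
  have h1q1 : (1:ℝ) - q < 1 := by linarith
  obtain ⟨hnq_sum, hnq_eq⟩ := tsum_pow_div_eq m hm (1 - q) hq1' h1q1
  have hbound : ∀ n : ℕ, ‖γ ^ n • ((P ^ n) *ᵥ r - α • (1 : S → ℝ))‖ ≤ (1 - q) ^ (n / m) := by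
    intro n
    rw [norm_smul, Real.norm_eq_abs, abs_of_nonneg (pow_nonneg hγ0 n)]
    calc γ ^ n * ‖(P ^ n) *ᵥ r - α • (1 : S → ℝ)‖
        ≤ 1 * ((1 - q) ^ (n / m)) := by
          apply mul_le_mul (pow_le_one₀ hγ0 hγ1.le) (hpart1 n) (norm_nonneg _) zero_le_one
      _ = (1 - q) ^ (n / m) := one_mul _
  have hnormsum : ‖∑' n : ℕ, γ ^ n • ((P ^ n) *ᵥ r - α • (1 : S → ℝ))‖
      ≤ (m : ℝ) * (1 - (1 - q))⁻¹ := by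
    rw [← hnq_eq]
    exact tsum_of_norm_bounded hnq_sum.hasSum hbound
  rw [norm_smul, Real.norm_eq_abs, abs_of_pos (by linarith : (0:ℝ) < 1 - γ)]
  have : (m : ℝ) * (1 - (1 - q))⁻¹ = (m : ℝ) / q := by
    rw [show (1 : ℝ) - (1 - q) = q by ring, div_eq_mul_inv]
  rw [this] at hnormsum
  calc (1 - γ) * ‖∑' n : ℕ, γ ^ n • ((P ^ n) *ᵥ r - α • (1 : S → ℝ))‖
      ≤ (1 - γ) * ((m : ℝ) / q) := mul_le_mul_of_nonneg_left hnormsum (by linarith)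
    _ = (1 - γ) * m / q := by ring
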